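/- arXiv:1405.4413 — 4 statements merged into one kernel-verified Lean document; each statement's English description precedes it below -/
import Mathlib

section
/- Fixed Point Lemma: Let P = (true, LOOP) be a linear loop program over ℝⁿ whose loop relation is defined by A·(x,x') ≤ b. Then P has a bounded infinite execution if and only if there exists a fixed point x* ∈ ℝⁿ with (x*, x*) ∈ LOOP. -/
/-!
Average the first `N + 1` transitions `(x t, x (t + 1))` of a bounded execution. The loop
relation is convex, so the average `z N` is again a transition, lying in the same ball as the
execution. The two components of `z N` differ by the telescoping term
`(x (N + 1) - x 0) / (N + 1)`, which tends to zero, so a limit point of `z N` (one exists by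
compactness) lies on the diagonal, and it is a transition because the loop relation is closed.
-/

open Filter Topology Matrix

section TransitionAverage

variable {E : Type*} [NormedAddCommGroup E] [NormedSpace ℝ E]

noncomputable def transitionAverage (x : ℕ → E) (N : ℕ) : E × E :=
  ((N : ℝ) + 1)⁻¹ • ∑ t ∈ Finset.range (N + 1), (x t, x (t + 1))

theorem transitionAverage_mem {S : Set (E × E)} (hS : Convex ℝ S) {x : ℕ → E}
    (hx : ∀ t, (x t, x (t + 1)) ∈ S) (N : ℕ) : transitionAverage x N ∈ S := by
  rw [transitionAverage, Finset.smul_sum]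
  refine hS.sum_mem (w := fun _ => ((N : ℝ) + 1)⁻¹) (fun _ _ => by positivity) ?_
    fun t _ => hx t
  simp only [Finset.sum_const, Finset.card_range, nsmul_eq_mul, Nat.cast_add, Nat.cast_one]
  exact mul_inv_cancel₀ (by positivity)

theorem norm_transitionAverage_le {x : ℕ → E} {d : ℝ} (hd : ∀ t, ‖x t‖ ≤ d)
    (N : ℕ) : ‖transitionAverage x N‖ ≤ d := by
  have hball := transitionAverage_mem (convex_closedBall (0 : E × E) d)
    (fun t => mem_closedBall_zero_iff.2 (norm_prod_le_iff.2 ⟨hd t, hd (t + 1)⟩)) N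
  exact mem_closedBall_zero_iff.1 hball

theorem transitionAverage_snd_sub_fst (x : ℕ → E) (N : ℕ) :
    (transitionAverage x N).2 - (transitionAverage x N).1 =
      ((N : ℝ) + 1)⁻¹ • (x (N + 1) - x 0) := by
  simp only [transitionAverage, Prod.smul_snd, Prod.smul_fst, Prod.snd_sum, Prod.fst_sum,
    ← smul_sub, ← Finset.sum_sub_distrib, Finset.sum_range_sub]

theorem tendsto_transitionAverage_snd_sub_fst {x : ℕ → E} {d : ℝ}
    (hd : ∀ t, ‖x t‖ ≤ d) :
    Tendsto (fun N => (transitionAverage x N).2 - (transitionAverage x N).1) atTop (𝓝 0) := by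
  have hinv : Tendsto (fun N : ℕ => ((N : ℝ) + 1)⁻¹) atTop (𝓝 0) := by
    simpa only [one_div] using tendsto_one_div_add_atTop_nhds_zero_nat (𝕜 := ℝ)
  simp only [transitionAverage_snd_sub_fst]
  refine hinv.zero_smul_isBoundedUnder_le ?_
  exact isBoundedUnder_of ⟨d + d, fun N => (norm_sub_le _ _).trans (add_le_add (hd _) (hd _))⟩

theorem exists_diag_mem_of_bounded_trajectory [ProperSpace E] {S : Set (E × E)}
    (hS : Convex ℝ S) (hS_closed : IsClosed S) {x : ℕ → E} {d : ℝ}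
    (hd : ∀ t, ‖x t‖ ≤ d) (hx : ∀ t, (x t, x (t + 1)) ∈ S) : ∃ a, (a, a) ∈ S := by
  have hcompact : IsCompact (S ∩ Metric.closedBall 0 d) :=
    (isCompact_closedBall (0 : E × E) d).inter_left hS_closed
  obtain ⟨p, hpS, φ, hφ, hlim⟩ := hcompact.tendsto_subseq fun N =>
    ⟨transitionAverage_mem hS hx N, mem_closedBall_zero_iff.2 (norm_transitionAverage_le hd N)⟩
  have hdiff : p.2 - p.1 = 0 :=
    tendsto_nhds_unique (((continuous_snd.sub continuous_fst).tendsto p).comp hlim)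
      ((tendsto_transitionAverage_snd_sub_fst hd).comp hφ.tendsto_atTop)
  have hp : (p.1, p.1) = p := Prod.ext rfl (sub_eq_zero.1 hdiff).symm
  exact ⟨p.1, hp ▸ hpS.1⟩

end TransitionAverage

section LoopRelation

variable {ι κ : Type*} [Fintype ι]

noncomputable def stackedMulVecLin (A : Matrix κ (ι ⊕ ι) ℝ) :
    EuclideanSpace ℝ ι × EuclideanSpace ℝ ι →ₗ[ℝ] κ → ℝ :=
  A.mulVecLin ∘ₗ (LinearEquiv.sumPiEquivProdPi ℝ ι ι fun _ => ℝ).symm.toLinearMap ∘ₗ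
    (WithLp.linearEquiv 2 ℝ (ι → ℝ)).toLinearMap.prodMap
      (WithLp.linearEquiv 2 ℝ (ι → ℝ)).toLinearMap

def loopRelation (A : Matrix κ (ι ⊕ ι) ℝ) (b : κ → ℝ) :
    Set (EuclideanSpace ℝ ι × EuclideanSpace ℝ ι) :=
  {p | A *ᵥ Sum.elim p.1 p.2 ≤ b}

theorem loopRelation_eq_preimage (A : Matrix κ (ι ⊕ ι) ℝ) (b : κ → ℝ) :
    loopRelation A b = stackedMulVecLin A ⁻¹' Set.Iic b :=
  rfl

theorem convex_loopRelation (A : Matrix κ (ι ⊕ ι) ℝ) (b : κ → ℝ) :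
    Convex ℝ (loopRelation A b) :=
  loopRelation_eq_preimage A b ▸ (convex_Iic b).linear_preimage _

theorem isClosed_loopRelation [Finite κ] (A : Matrix κ (ι ⊕ ι) ℝ) (b : κ → ℝ) :
    IsClosed (loopRelation A b) :=
  loopRelation_eq_preimage A b ▸
    isClosed_Iic.preimage (LinearMap.continuous_of_finiteDimensional _)

end LoopRelation

/-- **Fixed Point Lemma.**
Let `P = (true, LOOP)` be a linear loop program over `ℝⁿ` whose loop relation is
defined by `A·(x,x') ≤ b` (componentwise, on the stacked vector
`Sum.elim x x' : Fin n ⊕ Fin n → ℝ`).  Then `P` has a bounded infinite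
execution (a sequence `(x_t)` with `(x_t, x_{t+1}) ∈ LOOP` for all `t ≥ 1` and
`‖x_t‖ ≤ d` for all `t`, in the Euclidean norm) if and only if there is a fixed
point `x*` with `(x*, x*) ∈ LOOP`. -/
theorem bounded_infinite_execution_iff_fixed_point
    (n m : ℕ)
    (A : Matrix (Fin m) (Fin n ⊕ Fin n) ℝ) (b : Fin m → ℝ) :
    (∃ x : ℕ → EuclideanSpace ℝ (Fin n),
      (∃ d : ℝ, ∀ t : ℕ, ‖x t‖ ≤ d) ∧
      (∀ t : ℕ, 1 ≤ t → ∀ i, A.mulVec (Sum.elim (x t) (x (t + 1))) i ≤ b i))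
    ↔ (∃ xstar : EuclideanSpace ℝ (Fin n),
        ∀ i, A.mulVec (Sum.elim xstar xstar) i ≤ b i) := by
  constructor
  · rintro ⟨x, ⟨d, hd⟩, hx⟩
    exact exists_diag_mem_of_bounded_trajectory (convex_loopRelation A b)
      (isClosed_loopRelation A b) (x := fun t => x (t + 1)) (fun t => hd (t + 1))
      fun t => hx (t + 1) (Nat.le_add_left 1 t)
  · rintro ⟨xstar, hxstar⟩
    exact ⟨fun _ => xstar, ⟨‖xstar‖, fun _ => le_rfl⟩, fun _ _ => hxstar⟩
end

section
/- Corollary: If a linear loop program P = (true, LOOP) over ℝⁿ, with LOOP defined by A·(x,x') ≤ b, has a bounded infinite execution, then P has a geometric nontermination argument. In particular, given a fixed point x* with (x*,x*) ∈ LOOP, the tuple (x₀, x₁, y, λ) = (x*, x*, 0, 1) is a geometric nontermination argument for P. -/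
/-!
The Cesàro means of the pairs `(x t, x (t + 1))` of a bounded execution satisfy the loop
constraint, because it defines a convex set, and their two components differ by
`(x (T + 1) - x 0) / (T + 1) → 0`. A convergent subsequence therefore has a limit of the
form `(x*, x*)`, which satisfies the constraint since it defines a closed set. Such a fixed
point gives the geometric nontermination argument `(x*, x*, 0, 1)`.
-/

open Filter Finset Topology

section CesaroMean

variable {E : Type*} [NormedAddCommGroup E] [NormedSpace ℝ E]

noncomputable def cesaroMean (x : ℕ → E) (T : ℕ) : E :=
  ((T : ℝ) + 1)⁻¹ • ∑ t ∈ range (T + 1), x t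

theorem Convex.cesaroMean_mem {s : Set E} (hs : Convex ℝ s) {x : ℕ → E} (hx : ∀ t, x t ∈ s)
    (T : ℕ) : cesaroMean x T ∈ s := by
  rw [cesaroMean, smul_sum]
  refine hs.sum_mem (fun _ _ => by positivity) ?_ fun t _ => hx t
  rw [sum_const, card_range, nsmul_eq_mul]
  push_cast
  field_simp

theorem cesaroMean_shift_sub (x : ℕ → E) (T : ℕ) :
    cesaroMean (fun t => x (t + 1)) T - cesaroMean x T = ((T : ℝ) + 1)⁻¹ • (x (T + 1) - x 0) := by
  rw [cesaroMean, cesaroMean, ← smul_sub, ← sum_sub_distrib, sum_range_sub]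

theorem tendsto_cesaroMean_shift_sub {x : ℕ → E} (hx : Bornology.IsBounded (Set.range x)) :
    Tendsto (fun T => cesaroMean (fun t => x (t + 1)) T - cesaroMean x T) atTop (𝓝 0) := by
  simp_rw [cesaroMean_shift_sub]
  obtain ⟨R, hR⟩ := isBounded_iff_forall_norm_le.1 hx
  have hinv : Tendsto (fun T : ℕ => ((T : ℝ) + 1)⁻¹) atTop (𝓝 0) :=
    tendsto_inv_atTop_zero.comp (tendsto_natCast_atTop_atTop.atTop_add tendsto_const_nhds)
  exact hinv.zero_smul_isBoundedUnder_le <| isBoundedUnder_of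
    ⟨R + R, fun T => (norm_sub_le _ _).trans (add_le_add (hR _ ⟨_, rfl⟩) (hR _ ⟨_, rfl⟩))⟩

theorem cesaroMean_prodMk {F : Type*} [NormedAddCommGroup F] [NormedSpace ℝ F]
    (x : ℕ → E) (y : ℕ → F) (T : ℕ) :
    cesaroMean (fun t => (x t, y t)) T = (cesaroMean x T, cesaroMean y T) := by
  ext <;> simp [cesaroMean, Prod.fst_sum, Prod.snd_sum]

end CesaroMean

theorem Convex.exists_prodMk_self_mem_of_isBounded_range {E : Type*} [NormedAddCommGroup E]
    [NormedSpace ℝ E] [ProperSpace E] {S : Set (E × E)} (hconv : Convex ℝ S)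
    (hclosed : IsClosed S) {x : ℕ → E} (hx : Bornology.IsBounded (Set.range x))
    (hS : ∀ t, (x t, x (t + 1)) ∈ S) :
    ∃ z, (z, z) ∈ S := by
  set p := cesaroMean fun t => (x t, x (t + 1))
  obtain ⟨R, hR⟩ := isBounded_iff_forall_norm_le.1 hx
  have hpS : ∀ T, p T ∈ S := hconv.cesaroMean_mem hS
  have hpR : ∀ T, p T ∈ Metric.closedBall 0 R := (convex_closedBall 0 R).cesaroMean_mem fun t =>
    mem_closedBall_zero_iff.2 (norm_prod_le_iff.2 ⟨hR _ ⟨t, rfl⟩, hR _ ⟨t + 1, rfl⟩⟩)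
  obtain ⟨⟨u, v⟩, huv, φ, hφ, hlim⟩ :=
    ((isCompact_closedBall 0 R).inter_left hclosed).tendsto_subseq fun T => ⟨hpS T, hpR T⟩
  have hgap : Tendsto (fun T => (p (φ T)).2 - (p (φ T)).1) atTop (𝓝 (v - u)) :=
    ((continuous_snd.sub continuous_fst).tendsto _).comp hlim
  have hgap' : Tendsto (fun T => (p (φ T)).2 - (p (φ T)).1) atTop (𝓝 0) := by
    simpa only [p, cesaroMean_prodMk, Function.comp_def] using
      (tendsto_cesaroMean_shift_sub hx).comp hφ.tendsto_atTop
  obtain rfl : u = v := (sub_eq_zero.1 (tendsto_nhds_unique hgap hgap')).symm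
  exact ⟨u, huv.1⟩

namespace Matrix

variable {n m : ℕ}

noncomputable def mulVecSumElimLin (A : Matrix (Fin m) (Fin n ⊕ Fin n) ℝ) :
    EuclideanSpace ℝ (Fin n) × EuclideanSpace ℝ (Fin n) →ₗ[ℝ] Fin m → ℝ :=
  A.mulVecLin ∘ₗ (LinearEquiv.sumArrowLequivProdArrow (Fin n) (Fin n) ℝ ℝ).symm.toLinearMap ∘ₗ
    LinearMap.prodMap (WithLp.linearEquiv 2 ℝ (Fin n → ℝ)).toLinearMap
      (WithLp.linearEquiv 2 ℝ (Fin n → ℝ)).toLinearMap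

theorem exists_mulVec_sumElim_self_le_of_bounded (A : Matrix (Fin m) (Fin n ⊕ Fin n) ℝ)
    (b : Fin m → ℝ) {x : ℕ → EuclideanSpace ℝ (Fin n)} {d : ℝ} (hbound : ∀ t, ‖x t‖ ≤ d)
    (hexec : ∀ t, 1 ≤ t → ∀ i, A.mulVec (Sum.elim (x t) (x (t + 1))) i ≤ b i) :
    ∃ xs : EuclideanSpace ℝ (Fin n), ∀ i, A.mulVec (Sum.elim xs xs) i ≤ b i :=
  Convex.exists_prodMk_self_mem_of_isBounded_range (S := A.mulVecSumElimLin ⁻¹' Set.Iic b)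
    ((convex_Iic b).linear_preimage _)
    (isClosed_Iic.preimage A.mulVecSumElimLin.continuous_of_finiteDimensional)
    (isBounded_iff_forall_norm_le.2 ⟨d, by rintro _ ⟨t, rfl⟩; exact hbound (t + 1)⟩)
    fun t => hexec (t + 1) le_add_self

end Matrix

/-- **Corollary.**
If a linear loop program `P = (true, LOOP)` over `ℝⁿ`, with `LOOP` defined by
`A·(x,x') ≤ b`, has a bounded infinite execution, then `P` has a geometric
nontermination argument `(x₀, x₁, y, lam)` (the init condition is automatically
true since the stem is the full relation, so it is omitted).  In particular,
for every fixed point `x*` with `(x*, x*) ∈ LOOP`, the tuple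
`(x*, x*, 0, 1)` is a geometric nontermination argument for `P`. -/
theorem bounded_execution_implies_geometric_nontermination_argument
    (n m : ℕ)
    (A : Matrix (Fin m) (Fin n ⊕ Fin n) ℝ) (b : Fin m → ℝ)
    (x : ℕ → EuclideanSpace ℝ (Fin n)) (d : ℝ)
    (hbound : ∀ t : ℕ, ‖x t‖ ≤ d)
    (hexec : ∀ t : ℕ, 1 ≤ t → ∀ i, A.mulVec (Sum.elim (x t) (x (t + 1))) i ≤ b i) :
    (∃ (x₀ x₁ y : EuclideanSpace ℝ (Fin n)) (lam : ℝ),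
      0 < lam ∧
      (∀ i, A.mulVec (Sum.elim x₁ (x₁ + y)) i ≤ b i) ∧
      (∀ i, A.mulVec (Sum.elim y (lam • y)) i ≤ 0)) ∧
    (∀ xstar : EuclideanSpace ℝ (Fin n),
      (∀ i, A.mulVec (Sum.elim xstar xstar) i ≤ b i) →
      (0 : ℝ) < 1 ∧
      (∀ i, A.mulVec (Sum.elim xstar (xstar + (0 : EuclideanSpace ℝ (Fin n)))) i ≤ b i) ∧
      (∀ i, A.mulVec (Sum.elim (0 : EuclideanSpace ℝ (Fin n))
        ((1 : ℝ) • (0 : EuclideanSpace ℝ (Fin n)))) i ≤ 0)) := by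
  refine ⟨?_, fun xstar hxstar => ⟨one_pos, by simpa using hxstar, by simp⟩⟩
  obtain ⟨xs, hxs⟩ := A.exists_mulVec_sumElim_self_le_of_bounded b hbound hexec
  exact ⟨xs, xs, 0, 1, one_pos, by simpa using hxs, by simp⟩
end

section
/- Polyhedral recurrence set from a geometric nontermination argument (case λ ≥ 1): Let P = (STEM, LOOP) be a conjunctive linear lasso program over ℝⁿ with LOOP defined by A·(x,x') ≤ b, let N = (x₀, x₁, y, λ) be a geometric nontermination argument for P with λ ≥ 1, and let (z_i)_{i∈I} be a finite family of vectors spanning the orthogonal complement of y in ℝⁿ. Then the polyhedron S = { x ∈ ℝⁿ : yᵀ(x − x₁) ≥ 0 and z_iᵀ(x − x₁) = 0 for all i ∈ I } is a recurrence set for P. -/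
/-- **Polyhedral recurrence set from a geometric nontermination argument
(case `λ ≥ 1`).**
Let `P = (STEM, LOOP)` be a conjunctive linear lasso program over `ℝⁿ`
(`STEM` defined by `As·(x,x') ≤ bs`, `LOOP` by `A·(x,x') ≤ b`), let
`(x₀, x₁, y, lam)` be a geometric nontermination argument for `P` with
`lam ≥ 1`, and let `(z_i)_{i ∈ Fin I}` be a finite family of vectors spanning
the orthogonal complement of `y` (w.r.t. the standard inner product, i.e. the
dot product).  Then the polyhedron
`S = { x : yᵀ(x − x₁) ≥ 0 ∧ ∀ i, z_iᵀ(x − x₁) = 0 }` is a recurrence set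
for `P`: some state of `S` is in the range of `STEM`, and every state of `S`
has a `LOOP`-successor in `S`. -/
theorem polyhedral_recurrence_set_of_gnta_lambda_ge_one
    (n m ms I : ℕ)
    (A : Matrix (Fin m) (Fin n ⊕ Fin n) ℝ) (b : Fin m → ℝ)
    (As : Matrix (Fin ms) (Fin n ⊕ Fin n) ℝ) (bs : Fin ms → ℝ)
    (x₀ x₁ y : Fin n → ℝ) (lam : ℝ)
    (hdomain : 0 < lam)
    (hinit : ∀ i, As.mulVec (Sum.elim x₀ x₁) i ≤ bs i)
    (hpoint : ∀ i, A.mulVec (Sum.elim x₁ (x₁ + y)) i ≤ b i)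
    (hray : ∀ i, A.mulVec (Sum.elim y (lam • y)) i ≤ 0)
    (hlam : 1 ≤ lam)
    (z : Fin I → (Fin n → ℝ))
    (hspan : ∀ v : Fin n → ℝ,
      v ∈ Submodule.span ℝ (Set.range z) ↔ ∑ j, v j * y j = 0)
    (S : Set (Fin n → ℝ))
    (hS : S = { x | 0 ≤ ∑ j, y j * (x j - x₁ j) ∧
                    ∀ i : Fin I, ∑ j, z i j * (x j - x₁ j) = 0 }) :
    (∃ s ∈ S, ∃ x : Fin n → ℝ, ∀ i, As.mulVec (Sum.elim x s) i ≤ bs i) ∧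
    (∀ x ∈ S, ∃ x' ∈ S, ∀ i, A.mulVec (Sum.elim x x') i ≤ b i) := by
  subst hS
  constructor
  · exact ⟨x₁, ⟨by simp, fun i => by simp⟩, x₀, hinit⟩
  · rintro x ⟨hx1, hx2⟩
    have hzy : ∀ i : Fin I, ∑ j, z i j * y j = 0 := fun i =>
      (hspan (z i)).mp (Submodule.subset_span ⟨i, rfl⟩)
    have hden0 : (0:ℝ) ≤ ∑ j, y j * y j :=
      Finset.sum_nonneg fun j _ => mul_self_nonneg _
    set c : ℝ := (∑ j, y j * (x j - x₁ j)) / (∑ j, y j * y j) with hc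
    have hc0 : 0 ≤ c := div_nonneg hx1 hden0
    have huy : ∑ j, ((x j - x₁ j) - c * y j) * y j = 0 := by
      by_cases h : (∑ j, y j * y j) = 0
      · have hy : ∀ j, y j = 0 := by
          intro j
          have := (Finset.sum_eq_zero_iff_of_nonneg
            (fun j _ => mul_self_nonneg (y j))).mp h j (Finset.mem_univ j)
          nlinarith [this]
        simp [hy]
      · have e1 : ∑ j, ((x j - x₁ j) - c * y j) * y j
            = (∑ j, y j * (x j - x₁ j)) - c * (∑ j, y j * y j) := by
          rw [Finset.mul_sum, ← Finset.sum_sub_distrib]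
          exact Finset.sum_congr rfl fun j _ => by ring
        rw [e1, hc, div_mul_cancel₀ _ h, sub_self]
    have huspan : (fun j => (x j - x₁ j) - c * y j) ∈
        Submodule.span ℝ (Set.range z) := (hspan _).mpr huy
    let L : (Fin n → ℝ) →ₗ[ℝ] ℝ :=
      { toFun := fun v => ∑ j, v j * (x j - x₁ j)
        map_add' := fun a b' => by
          simp [add_mul, Finset.sum_add_distrib]
        map_smul' := fun r a => by
          simp [Finset.mul_sum, mul_assoc] }
    have hspanker : Submodule.span ℝ (Set.range z) ≤ LinearMap.ker L := by
      rw [Submodule.span_le]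
      rintro v ⟨i, rfl⟩
      simpa [L] using hx2 i
    have huw : ∑ j, ((x j - x₁ j) - c * y j) * (x j - x₁ j) = 0 :=
      hspanker huspan
    have huu : ∑ j, ((x j - x₁ j) - c * y j) * ((x j - x₁ j) - c * y j) = 0 := by
      have e2 : ∑ j, ((x j - x₁ j) - c * y j) * ((x j - x₁ j) - c * y j)
          = (∑ j, ((x j - x₁ j) - c * y j) * (x j - x₁ j))
            - c * (∑ j, ((x j - x₁ j) - c * y j) * y j) := by
        rw [Finset.mul_sum, ← Finset.sum_sub_distrib]
        exact Finset.sum_congr rfl fun j _ => by ring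
      rw [e2, huw, huy]; ring
    have hweq : ∀ j, x j - x₁ j = c * y j := by
      intro j
      have := (Finset.sum_eq_zero_iff_of_nonneg
        (fun j _ => mul_self_nonneg ((x j - x₁ j) - c * y j))).mp huu j
        (Finset.mem_univ j)
      nlinarith [this]
    refine ⟨fun j => x₁ j + (1 + c * lam) * y j, ⟨?_, ?_⟩, ?_⟩
    · have e3 : ∑ j, y j * ((x₁ j + (1 + c * lam) * y j) - x₁ j)
          = (1 + c * lam) * (∑ j, y j * y j) := by
        rw [Finset.mul_sum]
        exact Finset.sum_congr rfl fun j _ => by ring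
      rw [e3]
      have : 0 ≤ 1 + c * lam := by nlinarith
      positivity
    · intro i
      have e4 : ∑ j, z i j * ((x₁ j + (1 + c * lam) * y j) - x₁ j)
          = (1 + c * lam) * (∑ j, z i j * y j) := by
        rw [Finset.mul_sum]
        exact Finset.sum_congr rfl fun j _ => by ring
      rw [e4, hzy i, mul_zero]
    · intro i
      have hcomb : Sum.elim x (fun j => x₁ j + (1 + c * lam) * y j)
          = Sum.elim x₁ (x₁ + y) + c • Sum.elim y (lam • y) := by
        funext k
        cases k with
        | inl j =>
          have := hweq j
          simp only [Sum.elim_inl, Pi.add_apply, Pi.smul_apply, smul_eq_mul]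
          linarith
        | inr j =>
          simp only [Sum.elim_inr, Pi.add_apply, Pi.smul_apply, smul_eq_mul]
          ring
      rw [hcomb, Matrix.mulVec_add, Matrix.mulVec_smul]
      have h1 := hray i
      have h2 := hpoint i
      simp only [Pi.add_apply, Pi.smul_apply, smul_eq_mul]
      nlinarith [hray i, hpoint i, hc0]
end

section
/- Polyhedral recurrence set from a geometric nontermination argument (case 0 < λ < 1): Let P = (STEM, LOOP) be a conjunctive linear lasso program over ℝⁿ with LOOP defined by A·(x,x') ≤ b, let N = (x₀, x₁, y, λ) be a geometric nontermination argument for P with 0 < λ < 1, and let (z_i)_{i∈I} be a finite family of vectors spanning the orthogonal complement of y in ℝⁿ. Then the set S = { x ∈ ℝⁿ : 0 ≤ yᵀ(x − x₁) ≤ yᵀ(x₁ + (1/(1−λ))·y − x₁) and z_iᵀ(x − x₁) = 0 for all i ∈ I } is a recurrence set for P. -/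
/-- **Polyhedral recurrence set from a geometric nontermination argument
(case `0 < λ < 1`).**
Let `P = (STEM, LOOP)` be a conjunctive linear lasso program over `ℝⁿ`
(`STEM` defined by `As·(x,x') ≤ bs`, `LOOP` by `A·(x,x') ≤ b`), let
`(x₀, x₁, y, lam)` be a geometric nontermination argument for `P` with
`0 < lam < 1`, and let `(z_i)_{i ∈ Fin I}` be a finite family of vectors spanning
the orthogonal complement of `y` (w.r.t. the standard inner product, i.e. the
dot product).  Then the polyhedron
`S = { x : 0 ≤ yᵀ(x − x₁) ≤ yᵀ(x₁ + (1/(1−lam))·y − x₁) ∧ ∀ i, z_iᵀ(x − x₁) = 0 }`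
is a recurrence set
for `P`: some state of `S` is in the range of `STEM`, and every state of `S`
has a `LOOP`-successor in `S`. -/
theorem polyhedral_recurrence_set_of_gnta_lambda_lt_one
    (n m ms I : ℕ)
    (A : Matrix (Fin m) (Fin n ⊕ Fin n) ℝ) (b : Fin m → ℝ)
    (As : Matrix (Fin ms) (Fin n ⊕ Fin n) ℝ) (bs : Fin ms → ℝ)
    (x₀ x₁ y : Fin n → ℝ) (lam : ℝ)
    (hdomain : 0 < lam)
    (hinit : ∀ i, As.mulVec (Sum.elim x₀ x₁) i ≤ bs i)
    (hpoint : ∀ i, A.mulVec (Sum.elim x₁ (x₁ + y)) i ≤ b i)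
    (hray : ∀ i, A.mulVec (Sum.elim y (lam • y)) i ≤ 0)
    (hlam : lam < 1)
    (z : Fin I → (Fin n → ℝ))
    (hspan : ∀ v : Fin n → ℝ,
      v ∈ Submodule.span ℝ (Set.range z) ↔ ∑ j, v j * y j = 0)
    (S : Set (Fin n → ℝ))
    (hS : S = { x | 0 ≤ ∑ j, y j * (x j - x₁ j) ∧
                    (∑ j, y j * (x j - x₁ j)) ≤
                      ∑ j, y j * ((x₁ j + (1 / (1 - lam)) * y j) - x₁ j) ∧
                    ∀ i : Fin I, ∑ j, z i j * (x j - x₁ j) = 0 }) :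
    (∃ s ∈ S, ∃ x : Fin n → ℝ, ∀ i, As.mulVec (Sum.elim x s) i ≤ bs i) ∧
    (∀ x ∈ S, ∃ x' ∈ S, ∀ i, A.mulVec (Sum.elim x x') i ≤ b i) := by
  have h1lam : 0 < 1 - lam := by linarith
  have hne : (1:ℝ) - lam ≠ 0 := ne_of_gt h1lam
  have hY : (0:ℝ) ≤ ∑ j, y j * y j := Finset.sum_nonneg fun j _ => mul_self_nonneg _
  have hfrac : ∀ (x : Fin n → ℝ), ∑ j, y j * ((x₁ j + (1 / (1 - lam)) * y j) - x₁ j)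
      = (1/(1-lam)) * ∑ j, y j * y j := by
    intro x
    rw [Finset.mul_sum]
    exact Finset.sum_congr rfl fun j _ => by ring
  subst hS
  constructor
  · refine ⟨x₁, ⟨by simp, ?_, by simp⟩, x₀, hinit⟩
    rw [hfrac x₁]
    simp only [sub_self, mul_zero, Finset.sum_const_zero]
    positivity
  · rintro x ⟨hx1, hx2, hx3⟩
    rw [hfrac x] at hx2
    set d : Fin n → ℝ := fun j => x j - x₁ j with hd_def
    have hdz : ∀ v ∈ Submodule.span ℝ (Set.range z), ∑ j, v j * d j = 0 := by
      intro v hv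
      induction hv using Submodule.span_induction with
      | mem w hw => obtain ⟨i, rfl⟩ := hw; exact hx3 i
      | zero => simp
      | add u v _ _ hu hv =>
          simp only [Pi.add_apply, add_mul, Finset.sum_add_distrib, hu, hv, add_zero]
      | smul a u _ hu =>
          simp only [Pi.smul_apply, smul_eq_mul, mul_assoc, ← Finset.mul_sum, hu, mul_zero]
    set c : ℝ := if h : ∑ j, y j * y j = 0 then 0 else (∑ j, y j * d j) / (∑ j, y j * y j)
      with hc_def
    have hwy : ∑ j, (d j - c * y j) * y j = 0 := by
      by_cases h : ∑ j, y j * y j = 0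
      · have hy0 : ∀ j, y j = 0 := by
          intro j
          have := (Finset.sum_eq_zero_iff_of_nonneg (fun j _ => mul_self_nonneg (y j))).mp h
            j (Finset.mem_univ j)
          nlinarith [this]
        simp [hy0]
      · have e1 : ∑ j, (d j - c * y j) * y j
            = (∑ j, y j * d j) - c * ∑ j, y j * y j := by
          have : ∀ j ∈ Finset.univ, (d j - c * y j) * y j
              = y j * d j - c * (y j * y j) := fun j _ => by ring
          rw [Finset.sum_congr rfl this, Finset.sum_sub_distrib, ← Finset.mul_sum]
        rw [e1, hc_def, dif_neg h, div_mul_cancel₀ _ h, sub_self]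
    have hw0 : ∀ j, d j - c * y j = 0 := by
      have hwspan : (fun j => d j - c * y j) ∈ Submodule.span ℝ (Set.range z) :=
        (hspan _).mpr hwy
      have hwd : ∑ j, (d j - c * y j) * d j = 0 := hdz _ hwspan
      have hww : ∑ j, (d j - c * y j) * (d j - c * y j) = 0 := by
        have e2 : ∑ j, (d j - c * y j) * (d j - c * y j)
            = (∑ j, (d j - c * y j) * d j) - c * ∑ j, (d j - c * y j) * y j := by
          have : ∀ j ∈ Finset.univ, (d j - c * y j) * (d j - c * y j)
              = (d j - c * y j) * d j - c * ((d j - c * y j) * y j) := fun j _ => by ring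
          rw [Finset.sum_congr rfl this, Finset.sum_sub_distrib, ← Finset.mul_sum]
        rw [e2, hwd, hwy]; ring
      intro j
      have := (Finset.sum_eq_zero_iff_of_nonneg
        (fun j _ => mul_self_nonneg (d j - c * y j))).mp hww j (Finset.mem_univ j)
      nlinarith [this]
    have hd : ∀ j, d j = c * y j := fun j => by have := hw0 j; linarith
    have hcY : ∑ j, y j * d j = c * ∑ j, y j * y j := by
      rw [Finset.mul_sum]; exact Finset.sum_congr rfl fun j _ => by rw [hd j]; ring
    have hc0 : 0 ≤ c := by
      by_cases h : ∑ j, y j * y j = 0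
      · simp [hc_def, h]
      · simp only [hc_def, dif_neg h]
        exact div_nonneg hx1 hY
    have hupper : c * ∑ j, y j * y j ≤ (1/(1-lam)) * ∑ j, y j * y j := by
      rw [← hcY]; exact hx2
    have hsucc : ∀ w : Fin n → ℝ, ∑ j, w j * ((x₁ j + (1 + lam * c) * y j) - x₁ j)
        = (1 + lam * c) * ∑ j, w j * y j := by
      intro w
      rw [Finset.mul_sum]
      exact Finset.sum_congr rfl fun j _ => by ring
    refine ⟨fun j => x₁ j + (1 + lam * c) * y j, ⟨?_, ?_, ?_⟩, ?_⟩
    · rw [hsucc y]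
      have : 0 ≤ 1 + lam * c := by nlinarith
      positivity
    · rw [hsucc y, hfrac (fun j => x₁ j + (1 + lam * c) * y j)]
      have hmul : lam * (c * ∑ j, y j * y j) ≤ lam * ((1/(1-lam)) * ∑ j, y j * y j) :=
        mul_le_mul_of_nonneg_left hupper hdomain.le
      have key : (1/(1-lam)) * ∑ j, y j * y j
          = (∑ j, y j * y j) + lam * ((1/(1-lam)) * ∑ j, y j * y j) := by
        field_simp; ring
      have expand : (1 + lam * c) * ∑ j, y j * y j
          = (∑ j, y j * y j) + lam * (c * ∑ j, y j * y j) := by ring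
      rw [expand, key]
      linarith
    · intro i
      have hzy : ∑ j, z i j * y j = 0 :=
        (hspan (z i)).mp (Submodule.subset_span ⟨i, rfl⟩)
      rw [hsucc (z i), hzy, mul_zero]
    · intro i
      have hsum : Sum.elim x (fun j => x₁ j + (1 + lam * c) * y j)
          = Sum.elim x₁ (x₁ + y) + c • Sum.elim y (lam • y) := by
        funext s
        cases s with
        | inl j =>
            simp only [Sum.elim_inl, Pi.add_apply, Pi.smul_apply, smul_eq_mul]
            have := hd j; simp only [hd_def] at this; linarith
        | inr j =>
            simp only [Sum.elim_inr, Pi.add_apply, Pi.smul_apply, smul_eq_mul]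
            ring
      rw [hsum, Matrix.mulVec_add, Matrix.mulVec_smul]
      have h2 : (c • A.mulVec (Sum.elim y (lam • y))) i ≤ 0 := by
        simp only [Pi.smul_apply, smul_eq_mul]
        exact mul_nonpos_of_nonneg_of_nonpos hc0 (hray i)
      have := hpoint i
      simp only [Pi.add_apply]
      linarith [h2]
end
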